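/- arXiv:1105.2548 — 3 statements merged into one kernel-verified Lean document; each statement's English description precedes it below -/
import Mathlib

section
/- For any bipartite density operator ρ_AB and any product projective measurement as above, the quantity I(ρ_AB) − I(Φ_AB(ρ_AB)) equals S(ρ_AB ‖ Φ_AB(ρ_AB)) − S(ρ_A ‖ Φ_A(ρ_A)) − S(ρ_B ‖ Φ_B(ρ_B)). -/
/-!
If `P i` are orthogonal projectors summing to `1`, the pinching `Φ(ρ) = ∑ i, P i ρ P i` satisfies
`P i Φ(ρ) = P i ρ P i = Φ(ρ) P i`. So every `P i` commutes with `Φ(ρ)`, hence with `log Φ(ρ)`, and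
cyclicity of the trace gives `Tr ρ log Φ(ρ) = Tr Φ(ρ) log Φ(ρ)`, i.e. `S(ρ‖Φ(ρ)) = S(Φ(ρ)) - S(ρ)`.

The product measurement `Φ_AB` is the pinching by the projectors `Π_A^j ⊗ Π_B^k`. It is also the
composite, in either order, of the pinchings by `Π_A^j ⊗ 1` and by `1 ⊗ Π_B^k`; a pinching acting
on one factor is invisible to the partial trace over that factor and passes through the other
partial trace, so `Tr_B Φ_AB(ρ) = Φ_A(ρ_A)` and `Tr_A Φ_AB(ρ) = Φ_B(ρ_B)`. Substituting the three
entropy differences into `I = S_A + S_B - S_AB` gives the identity.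
-/

open scoped Kronecker
open Matrix
open scoped ComplexOrder

/-- Matrix logarithm (base 2) of a Hermitian matrix, via its spectral decomposition;
junk value `0` on non-Hermitian input.  `Real.logb 2 0 = 0` encodes the usual
`0 log 0 = 0` convention. -/
noncomputable def matLog2 {n : Type*} [Fintype n] [DecidableEq n] (A : Matrix n n ℂ) :
    Matrix n n ℂ :=
  if hA : A.IsHermitian then
    (hA.eigenvectorUnitary : Matrix n n ℂ) *
      Matrix.diagonal (fun i => (Real.logb 2 (hA.eigenvalues i) : ℂ)) *
      (star (hA.eigenvectorUnitary : Matrix n n ℂ))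
  else 0

/-- von Neumann entropy (base-2): `S(ρ) = -Tr(ρ log₂ ρ)`. -/
noncomputable def vN {n : Type*} [Fintype n] [DecidableEq n] (ρ : Matrix n n ℂ) : ℝ :=
  -(Matrix.trace (ρ * matLog2 ρ)).re

/-- Quantum relative entropy (base-2): `S(ρ‖σ) = Tr(ρ log₂ ρ) - Tr(ρ log₂ σ)`. -/
noncomputable def relEnt {n : Type*} [Fintype n] [DecidableEq n] (ρ σ : Matrix n n ℂ) : ℝ :=
  (Matrix.trace (ρ * matLog2 ρ)).re - (Matrix.trace (ρ * matLog2 σ)).re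

/-- A density operator: positive semidefinite with unit trace. -/
noncomputable def IsDensity {n : Type*} [Fintype n] [DecidableEq n] (ρ : Matrix n n ℂ) : Prop :=
  ρ.PosSemidef ∧ ρ.trace = 1

/-- Partial trace over the second (B) factor. -/
noncomputable def ptrB {m n : Type*} [Fintype n] (ρ : Matrix (m × n) (m × n) ℂ) : Matrix m m ℂ :=
  Matrix.of fun a b => ∑ j : n, ρ (a, j) (b, j)

/-- Partial trace over the first (A) factor. -/
noncomputable def ptrA {m n : Type*} [Fintype m] (ρ : Matrix (m × n) (m × n) ℂ) : Matrix n n ℂ :=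
  Matrix.of fun a b => ∑ i : m, ρ (i, a) (i, b)

/-- A complete orthonormal family of rank-one projectors (a rank-one von Neumann
measurement): Hermitian idempotents, mutually orthogonal, summing to the identity,
each of unit trace (rank one). -/
def MeasFam {ι n : Type*} [Fintype ι] [Fintype n] [DecidableEq n]
    (P : ι → Matrix n n ℂ) : Prop :=
  (∀ i, (P i).IsHermitian) ∧ (∀ i, P i * P i = P i) ∧
    (∀ i j, i ≠ j → P i * P j = 0) ∧ (∑ i, P i = 1) ∧ (∀ i, (P i).trace = 1)

/-- Pinching (non-selective projective measurement) channel. -/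
noncomputable def pinch {ι n : Type*} [Fintype ι] [Fintype n] (P : ι → Matrix n n ℂ)
    (ρ : Matrix n n ℂ) : Matrix n n ℂ :=
  ∑ i, P i * ρ * P i

variable {m n ι κ : Type*} [Fintype m] [DecidableEq m] [Fintype n] [DecidableEq n]
  [Fintype ι] [Fintype κ]

/-- The product measurement channel `Φ_AB`. -/
noncomputable def PhiAB (PA : ι → Matrix m m ℂ) (PB : κ → Matrix n n ℂ)
    (ρ : Matrix (m × n) (m × n) ℂ) : Matrix (m × n) (m × n) ℂ :=
  ∑ j, ∑ k, (PA j ⊗ₖ PB k) * ρ * (PA j ⊗ₖ PB k)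

/-- Quantum mutual information `I(ρ) = S(ρ_A) + S(ρ_B) - S(ρ)`. -/
noncomputable def mutInfo (ρ : Matrix (m × n) (m × n) ℂ) : ℝ :=
  vN (ptrB ρ) + vN (ptrA ρ) - vN ρ

theorem Matrix.kronecker_sum {R l m n p τ : Type*} [NonUnitalNonAssocSemiring R]
    (s : Finset τ) (A : Matrix l m R) (B : τ → Matrix n p R) :
    A ⊗ₖ (∑ k ∈ s, B k) = ∑ k ∈ s, A ⊗ₖ B k := by
  ext
  simp [Matrix.sum_apply, Finset.mul_sum]

theorem Matrix.sum_kronecker {R l m n p τ : Type*} [NonUnitalNonAssocSemiring R]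
    (s : Finset τ) (A : τ → Matrix l m R) (B : Matrix n p R) :
    (∑ k ∈ s, A k) ⊗ₖ B = ∑ k ∈ s, A k ⊗ₖ B := by
  ext
  simp [Matrix.sum_apply, Finset.sum_mul]

section Pinching

variable {d τ : Type*} [Fintype d] [Fintype τ]

theorem matLog2_eq_cfc [DecidableEq d] (A : Matrix d d ℂ) :
    matLog2 A = cfc (Real.logb 2) A := by
  by_cases hA : A.IsHermitian
  · rw [matLog2, dif_pos hA, hA.cfc_eq, IsHermitian.cfc, Unitary.conjStarAlgAut_apply]
    rfl
  · rw [matLog2, dif_neg hA]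
    exact (cfc_apply_of_not_predicate A (hA : ¬IsSelfAdjoint A)).symm

theorem Commute.matLog2_right [DecidableEq d] {A B : Matrix d d ℂ} (h : Commute B A) :
    Commute B (matLog2 A) := by
  rw [matLog2_eq_cfc]
  exact (h.symm.cfc_real _).symm

theorem mul_pinch {P : τ → Matrix d d ℂ} (hidem : ∀ i, P i * P i = P i)
    (horth : ∀ i j, i ≠ j → P i * P j = 0) (ρ : Matrix d d ℂ) (i : τ) :
    P i * pinch P ρ = P i * ρ * P i := by
  rw [pinch, Finset.mul_sum, Finset.sum_eq_single i]
  · rw [← Matrix.mul_assoc, ← Matrix.mul_assoc, hidem]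
  · intro j _ hj
    rw [← Matrix.mul_assoc, ← Matrix.mul_assoc, horth i j (Ne.symm hj), Matrix.zero_mul,
      Matrix.zero_mul]
  · simp

theorem pinch_mul {P : τ → Matrix d d ℂ} (hidem : ∀ i, P i * P i = P i)
    (horth : ∀ i j, i ≠ j → P i * P j = 0) (ρ : Matrix d d ℂ) (i : τ) :
    pinch P ρ * P i = P i * ρ * P i := by
  rw [pinch, Finset.sum_mul, Finset.sum_eq_single i]
  · rw [Matrix.mul_assoc, hidem]
  · intro j _ hj
    rw [Matrix.mul_assoc, horth j i hj, Matrix.mul_zero]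
  · simp

theorem trace_pinch_mul_of_commute [DecidableEq d] {P : τ → Matrix d d ℂ}
    (hidem : ∀ i, P i * P i = P i) (hsum : ∑ i, P i = 1) (ρ L : Matrix d d ℂ)
    (hL : ∀ i, Commute (P i) L) :
    trace (pinch P ρ * L) = trace (ρ * L) := by
  calc trace (pinch P ρ * L) = ∑ i, trace (ρ * (P i * L * P i)) := by
        simp only [pinch, Finset.sum_mul, trace_sum]
        refine Finset.sum_congr rfl fun i _ => ?_
        rw [Matrix.mul_assoc, Matrix.mul_assoc, trace_mul_comm]
        simp only [Matrix.mul_assoc]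
    _ = ∑ i, trace (ρ * (P i * L)) := by
        simp only [(hL _).eq, Matrix.mul_assoc, hidem]
    _ = trace (ρ * L) := by
        rw [← trace_sum, ← Matrix.mul_sum, ← Finset.sum_mul, hsum, Matrix.one_mul]

end Pinching

structure IsPinchingFamily {d τ : Type*} [Fintype d] [DecidableEq d] [Fintype τ]
    (P : τ → Matrix d d ℂ) : Prop where
  mul_self : ∀ i, P i * P i = P i
  mul_of_ne : ∀ i j, i ≠ j → P i * P j = 0
  sum_eq_one : ∑ i, P i = 1

namespace IsPinchingFamily

variable {d τ : Type*} [Fintype d] [DecidableEq d] [Fintype τ] {P : τ → Matrix d d ℂ}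

theorem sum_mul_self (hP : IsPinchingFamily P) : ∑ i, P i * P i = 1 := by
  simp only [hP.mul_self, hP.sum_eq_one]

theorem kronecker {e σ : Type*} [Fintype e] [DecidableEq e] [Fintype σ]
    {Q : σ → Matrix e e ℂ} (hP : IsPinchingFamily P) (hQ : IsPinchingFamily Q) :
    IsPinchingFamily fun p : τ × σ => P p.1 ⊗ₖ Q p.2 where
  mul_self p := by rw [← mul_kronecker_mul, hP.mul_self, hQ.mul_self]
  mul_of_ne p q hpq := by
    rw [← mul_kronecker_mul]
    rcases eq_or_ne p.1 q.1 with h₁ | h₁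
    · rw [hQ.mul_of_ne _ _ fun h₂ => hpq (Prod.ext h₁ h₂), kronecker_zero]
    · rw [hP.mul_of_ne _ _ h₁, zero_kronecker]
  sum_eq_one := by
    rw [Fintype.sum_prod_type]
    simp only [← kronecker_sum, ← sum_kronecker, hP.sum_eq_one, hQ.sum_eq_one, one_kronecker_one]

end IsPinchingFamily

theorem MeasFam.isPinchingFamily {d τ : Type*} [Fintype d] [DecidableEq d] [Fintype τ]
    {P : τ → Matrix d d ℂ} (hP : MeasFam P) : IsPinchingFamily P :=
  ⟨hP.2.1, hP.2.2.1, hP.2.2.2.1⟩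

theorem relEnt_pinch {d τ : Type*} [Fintype d] [DecidableEq d] [Fintype τ]
    {P : τ → Matrix d d ℂ} (hP : IsPinchingFamily P) (ρ : Matrix d d ℂ) :
    relEnt ρ (pinch P ρ) = vN (pinch P ρ) - vN ρ := by
  have hcomm (i : τ) : Commute (P i) (pinch P ρ) :=
    (mul_pinch hP.mul_self hP.mul_of_ne ρ i).trans (pinch_mul hP.mul_self hP.mul_of_ne ρ i).symm
  have h := trace_pinch_mul_of_commute hP.mul_self hP.sum_eq_one ρ _ fun i =>
    (hcomm i).matLog2_right
  rw [relEnt, vN, vN, h]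
  ring

theorem ptrB_sum {m n τ : Type*} [Fintype n] (s : Finset τ) (f : τ → Matrix (m × n) (m × n) ℂ) :
    ptrB (∑ i ∈ s, f i) = ∑ i ∈ s, ptrB (f i) := by
  ext a b
  simp only [ptrB, of_apply, Matrix.sum_apply]
  exact Finset.sum_comm

theorem ptrA_sum {m n τ : Type*} [Fintype m] (s : Finset τ) (f : τ → Matrix (m × n) (m × n) ℂ) :
    ptrA (∑ i ∈ s, f i) = ∑ i ∈ s, ptrA (f i) := by
  ext a b
  simp only [ptrA, of_apply, Matrix.sum_apply]
  exact Finset.sum_comm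

theorem ptrB_kronecker_one_mul {m n : Type*} [Fintype m] [Fintype n] [DecidableEq n]
    (A : Matrix m m ℂ) (M : Matrix (m × n) (m × n) ℂ) :
    ptrB ((A ⊗ₖ (1 : Matrix n n ℂ)) * M) = A * ptrB M := by
  ext a b
  simpa [ptrB, mul_apply, Fintype.sum_prod_type, one_apply, Finset.mul_sum] using Finset.sum_comm

theorem ptrB_mul_kronecker_one {m n : Type*} [Fintype m] [Fintype n] [DecidableEq n]
    (A : Matrix m m ℂ) (M : Matrix (m × n) (m × n) ℂ) :
    ptrB (M * (A ⊗ₖ (1 : Matrix n n ℂ))) = ptrB M * A := by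
  ext a b
  simpa [ptrB, mul_apply, Fintype.sum_prod_type, one_apply, Finset.sum_mul] using Finset.sum_comm

theorem ptrB_one_kronecker_mul {m n : Type*} [Fintype m] [DecidableEq m] [Fintype n]
    (B : Matrix n n ℂ) (M : Matrix (m × n) (m × n) ℂ) :
    ptrB (((1 : Matrix m m ℂ) ⊗ₖ B) * M) = ptrB (M * ((1 : Matrix m m ℂ) ⊗ₖ B)) := by
  ext a b
  simpa [ptrB, mul_apply, Fintype.sum_prod_type, one_apply, mul_comm] using Finset.sum_comm

theorem ptrA_one_kronecker_mul {m n : Type*} [Fintype m] [DecidableEq m] [Fintype n]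
    (B : Matrix n n ℂ) (M : Matrix (m × n) (m × n) ℂ) :
    ptrA (((1 : Matrix m m ℂ) ⊗ₖ B) * M) = B * ptrA M := by
  ext a b
  simpa [ptrA, mul_apply, Fintype.sum_prod_type, one_apply, Finset.mul_sum] using Finset.sum_comm

theorem ptrA_mul_one_kronecker {m n : Type*} [Fintype m] [DecidableEq m] [Fintype n]
    (B : Matrix n n ℂ) (M : Matrix (m × n) (m × n) ℂ) :
    ptrA (M * ((1 : Matrix m m ℂ) ⊗ₖ B)) = ptrA M * B := by
  ext a b
  simpa [ptrA, mul_apply, Fintype.sum_prod_type, one_apply, Finset.sum_mul] using Finset.sum_comm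

theorem ptrA_kronecker_one_mul {m n : Type*} [Fintype m] [Fintype n] [DecidableEq n]
    (A : Matrix m m ℂ) (M : Matrix (m × n) (m × n) ℂ) :
    ptrA ((A ⊗ₖ (1 : Matrix n n ℂ)) * M) = ptrA (M * (A ⊗ₖ (1 : Matrix n n ℂ))) := by
  ext a b
  simpa [ptrA, mul_apply, Fintype.sum_prod_type, one_apply, mul_comm] using Finset.sum_comm

theorem ptrB_pinch_kronecker_one {m n τ : Type*} [Fintype m] [Fintype n] [DecidableEq n]
    [Fintype τ] (P : τ → Matrix m m ℂ) (M : Matrix (m × n) (m × n) ℂ) :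
    ptrB (pinch (fun j => P j ⊗ₖ (1 : Matrix n n ℂ)) M) = pinch P (ptrB M) := by
  simp only [pinch, ptrB_sum, ptrB_mul_kronecker_one, ptrB_kronecker_one_mul]

theorem ptrA_pinch_one_kronecker {m n τ : Type*} [Fintype m] [DecidableEq m] [Fintype n]
    [Fintype τ] (Q : τ → Matrix n n ℂ) (M : Matrix (m × n) (m × n) ℂ) :
    ptrA (pinch (fun k => (1 : Matrix m m ℂ) ⊗ₖ Q k) M) = pinch Q (ptrA M) := by
  simp only [pinch, ptrA_sum, ptrA_mul_one_kronecker, ptrA_one_kronecker_mul]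

theorem ptrB_pinch_one_kronecker {m n τ : Type*} [Fintype m] [DecidableEq m] [Fintype n]
    [DecidableEq n] [Fintype τ] (Q : τ → Matrix n n ℂ) (hQ : ∑ k, Q k * Q k = 1)
    (M : Matrix (m × n) (m × n) ℂ) :
    ptrB (pinch (fun k => (1 : Matrix m m ℂ) ⊗ₖ Q k) M) = ptrB M := by
  calc ptrB (pinch (fun k => (1 : Matrix m m ℂ) ⊗ₖ Q k) M)
      = ptrB (M * ∑ k, (1 : Matrix m m ℂ) ⊗ₖ (Q k * Q k)) := by
        simp only [pinch, ptrB_sum, Matrix.mul_sum, Matrix.mul_assoc, ptrB_one_kronecker_mul,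
          ← mul_kronecker_mul, Matrix.mul_one]
    _ = ptrB M := by
        rw [← kronecker_sum, hQ, one_kronecker_one, Matrix.mul_one]

theorem ptrA_pinch_kronecker_one {m n τ : Type*} [Fintype m] [DecidableEq m] [Fintype n]
    [DecidableEq n] [Fintype τ] (P : τ → Matrix m m ℂ) (hP : ∑ j, P j * P j = 1)
    (M : Matrix (m × n) (m × n) ℂ) :
    ptrA (pinch (fun j => P j ⊗ₖ (1 : Matrix n n ℂ)) M) = ptrA M := by
  calc ptrA (pinch (fun j => P j ⊗ₖ (1 : Matrix n n ℂ)) M)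
      = ptrA (M * ∑ j, (P j * P j) ⊗ₖ (1 : Matrix n n ℂ)) := by
        simp only [pinch, ptrA_sum, Matrix.mul_sum, Matrix.mul_assoc, ptrA_kronecker_one_mul,
          ← mul_kronecker_mul, Matrix.mul_one]
    _ = ptrA M := by
        rw [← sum_kronecker, hP, one_kronecker_one, Matrix.mul_one]

theorem kronecker_conj_eq_kronecker_one_conj (A : Matrix m m ℂ) (B : Matrix n n ℂ)
    (ρ : Matrix (m × n) (m × n) ℂ) :
    (A ⊗ₖ B) * ρ * (A ⊗ₖ B) =
      (A ⊗ₖ (1 : Matrix n n ℂ)) * (((1 : Matrix m m ℂ) ⊗ₖ B) * ρ * ((1 : Matrix m m ℂ) ⊗ₖ B)) *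
        (A ⊗ₖ (1 : Matrix n n ℂ)) := by
  simp only [← Matrix.mul_assoc, ← mul_kronecker_mul, Matrix.mul_one, Matrix.one_mul]
  rw [Matrix.mul_assoc _ ((1 : Matrix m m ℂ) ⊗ₖ B), ← mul_kronecker_mul, Matrix.one_mul,
    Matrix.mul_one]

theorem kronecker_conj_eq_one_kronecker_conj (A : Matrix m m ℂ) (B : Matrix n n ℂ)
    (ρ : Matrix (m × n) (m × n) ℂ) :
    (A ⊗ₖ B) * ρ * (A ⊗ₖ B) =
      ((1 : Matrix m m ℂ) ⊗ₖ B) * ((A ⊗ₖ (1 : Matrix n n ℂ)) * ρ * (A ⊗ₖ (1 : Matrix n n ℂ))) *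
        ((1 : Matrix m m ℂ) ⊗ₖ B) := by
  simp only [← Matrix.mul_assoc, ← mul_kronecker_mul, Matrix.mul_one, Matrix.one_mul]
  rw [Matrix.mul_assoc _ (A ⊗ₖ (1 : Matrix n n ℂ)), ← mul_kronecker_mul, Matrix.one_mul,
    Matrix.mul_one]

theorem PhiAB_eq_pinch_kronecker_one_pinch (PA : ι → Matrix m m ℂ) (PB : κ → Matrix n n ℂ)
    (ρ : Matrix (m × n) (m × n) ℂ) :
    PhiAB PA PB ρ = pinch (fun j => PA j ⊗ₖ (1 : Matrix n n ℂ))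
      (pinch (fun k => (1 : Matrix m m ℂ) ⊗ₖ PB k) ρ) := by
  simp only [PhiAB, pinch, Matrix.mul_sum, Matrix.sum_mul, ← kronecker_conj_eq_kronecker_one_conj]

theorem PhiAB_eq_pinch_one_kronecker_pinch (PA : ι → Matrix m m ℂ) (PB : κ → Matrix n n ℂ)
    (ρ : Matrix (m × n) (m × n) ℂ) :
    PhiAB PA PB ρ = pinch (fun k => (1 : Matrix m m ℂ) ⊗ₖ PB k)
      (pinch (fun j => PA j ⊗ₖ (1 : Matrix n n ℂ)) ρ) := by
  simp only [PhiAB, pinch, Matrix.mul_sum, Matrix.sum_mul, ← kronecker_conj_eq_one_kronecker_conj]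
  exact Finset.sum_comm

theorem ptrB_PhiAB (PA : ι → Matrix m m ℂ) {PB : κ → Matrix n n ℂ}
    (hPB : ∑ k, PB k * PB k = 1) (ρ : Matrix (m × n) (m × n) ℂ) :
    ptrB (PhiAB PA PB ρ) = pinch PA (ptrB ρ) := by
  rw [PhiAB_eq_pinch_kronecker_one_pinch, ptrB_pinch_kronecker_one, ptrB_pinch_one_kronecker _ hPB]

theorem ptrA_PhiAB {PA : ι → Matrix m m ℂ} (hPA : ∑ j, PA j * PA j = 1)
    (PB : κ → Matrix n n ℂ) (ρ : Matrix (m × n) (m × n) ℂ) :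
    ptrA (PhiAB PA PB ρ) = pinch PB (ptrA ρ) := by
  rw [PhiAB_eq_pinch_one_kronecker_pinch, ptrA_pinch_one_kronecker, ptrA_pinch_kronecker_one _ hPA]

theorem PhiAB_eq_pinch_kronecker {m n ι κ : Type*} [Fintype m] [Fintype n]
    [Fintype ι] [Fintype κ] (PA : ι → Matrix m m ℂ) (PB : κ → Matrix n n ℂ)
    (ρ : Matrix (m × n) (m × n) ℂ) :
    PhiAB PA PB ρ = pinch (fun p : ι × κ => PA p.1 ⊗ₖ PB p.2) ρ := by
  rw [PhiAB, pinch, Fintype.sum_prod_type]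

theorem stmt5_general (ρ : Matrix (m × n) (m × n) ℂ)
    (PA : ι → Matrix m m ℂ) (PB : κ → Matrix n n ℂ)
    (hPA : MeasFam PA) (hPB : MeasFam PB) :
    mutInfo ρ - mutInfo (PhiAB PA PB ρ) =
      relEnt ρ (PhiAB PA PB ρ) - relEnt (ptrB ρ) (pinch PA (ptrB ρ)) -
        relEnt (ptrA ρ) (pinch PB (ptrA ρ)) := by
  have hA := hPA.isPinchingFamily
  have hB := hPB.isPinchingFamily
  rw [mutInfo, mutInfo, ptrB_PhiAB PA hB.sum_mul_self, ptrA_PhiAB hA.sum_mul_self,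
    PhiAB_eq_pinch_kronecker, relEnt_pinch (hA.kronecker hB), relEnt_pinch hA, relEnt_pinch hB]
  ring

/-- `I(ρ_AB) - I(Φ_AB(ρ_AB)) = S(ρ_AB‖Φ_AB(ρ_AB)) - S(ρ_A‖Φ_A(ρ_A)) - S(ρ_B‖Φ_B(ρ_B))`. -/
theorem stmt5 (ρ : Matrix (m × n) (m × n) ℂ) (hρ : IsDensity ρ)
    (PA : ι → Matrix m m ℂ) (PB : κ → Matrix n n ℂ)
    (hPA : MeasFam PA) (hPB : MeasFam PB) :
    mutInfo ρ - mutInfo (PhiAB PA PB ρ) =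
      relEnt ρ (PhiAB PA PB ρ) - relEnt (ptrB ρ) (pinch PA (ptrB ρ)) -
        relEnt (ptrA ρ) (pinch PB (ptrA ρ)) :=
  stmt5_general ρ PA PB hPA hPB
end

section
/- The global quantum discord of the three-qubit GHZ state equals 1: the minimum over all local product projective measurement bases of S(Φ(ρ)) is 1, attained by measuring each qubit in the σ^z eigenbasis. -/
open scoped Kronecker
open Matrix
open scoped ComplexOrder

/-- The three-qubit GHZ vector `(|↑↑↑⟩ + |↓↓↓⟩)/√2`. -/
noncomputable def ghz : Fin 2 × Fin 2 × Fin 2 → ℂ := fun s =>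
  if s = (0, 0, 0) ∨ s = (1, 1, 1) then ((Real.sqrt 2)⁻¹ : ℝ) else 0

/-- The GHZ density operator `|GHZ⟩⟨GHZ|`. -/
noncomputable def ghzState : Matrix (Fin 2 × Fin 2 × Fin 2) (Fin 2 × Fin 2 × Fin 2) ℂ :=
  Matrix.vecMulVec ghz (star ghz)

/-- The three-qubit product measurement channel built from local rank-one
measurements `Q1, Q2, Q3`. -/
noncomputable def phi3 (Q1 Q2 Q3 : Fin 2 → Matrix (Fin 2) (Fin 2) ℂ)
    (ρ : Matrix (Fin 2 × Fin 2 × Fin 2) (Fin 2 × Fin 2 × Fin 2) ℂ) :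
    Matrix (Fin 2 × Fin 2 × Fin 2) (Fin 2 × Fin 2 × Fin 2) ℂ :=
  ∑ s : Fin 2 × Fin 2 × Fin 2,
    (Q1 s.1 ⊗ₖ (Q2 s.2.1 ⊗ₖ Q3 s.2.2)) * ρ * (Q1 s.1 ⊗ₖ (Q2 s.2.1 ⊗ₖ Q3 s.2.2))

/-!
A complete rank-one measurement on `ℂⁿ` consists of the projectors onto the columns of a unitary
`V`, and a product of such measurements is the one given by the Kronecker product of the
unitaries. Measuring a pure state `g` in the column basis of `W` gives `W diag(p) W⋆` with
`p s = |(W⋆ g) s|²`, whose von Neumann entropy is the Shannon entropy of `p`, and `∑ p = 1` by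
unitarity. When `W` is a Kronecker product of three qubit unitaries, every column `w` is a
product vector, so Cauchy–Schwarz gives `|w (0,0,0)| + |w (1,1,1)| ≤ 1` and hence
`p s = |w (0,0,0) + w (1,1,1)|² / 2 ≤ 1 / 2`. Then `-p s log₂ p s ≥ p s`, so the entropy is at least
`∑ p = 1`. The `σᶻ` basis (`W = 1`) gives `p = (1/2, 0, …, 0, 1/2)`, of entropy exactly `1`.
-/

lemma logb_two_half : Real.logb 2 (1 / 2) = -1 := by
  rw [one_div, Real.logb_inv, Real.logb_self_eq_one one_lt_two]

lemma le_neg_mul_logb_two {x : ℝ} (h0 : 0 ≤ x) (h : x ≤ 1 / 2) : x ≤ -(x * Real.logb 2 x) := by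
  rcases h0.eq_or_lt with rfl | hpos
  · simp
  have hlog : Real.logb 2 x ≤ -1 := by
    calc Real.logb 2 x ≤ Real.logb 2 (1 / 2) := Real.logb_le_logb_of_le (by norm_num) hpos h
      _ = -1 := logb_two_half
  nlinarith

lemma one_le_neg_sum_mul_logb_two {ι : Type*} [Fintype ι] {p : ι → ℝ} (h0 : ∀ i, 0 ≤ p i)
    (h : ∀ i, p i ≤ 1 / 2) (hsum : ∑ i, p i = 1) : 1 ≤ -∑ i, p i * Real.logb 2 (p i) := by
  rw [← hsum, ← Finset.sum_neg_distrib]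
  exact Finset.sum_le_sum fun i _ => le_neg_mul_logb_two (h0 i) (h i)

section VonNeumannEntropy

variable {n : Type*} [Fintype n] [DecidableEq n]

lemma trace_mul_matLog2 {A : Matrix n n ℂ} (hA : A.IsHermitian) :
    (A * matLog2 A).trace =
      ∑ i, ((hA.eigenvalues i * Real.logb 2 (hA.eigenvalues i) : ℝ) : ℂ) := by
  set U : Matrix n n ℂ := (hA.eigenvectorUnitary : Matrix n n ℂ)
  have hUU : star U * U = 1 := mem_unitaryGroup_iff'.mp hA.eigenvectorUnitary.2
  have hA' : A = U * diagonal (fun i => (hA.eigenvalues i : ℂ)) * star U := hA.spectral_theorem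
  rw [matLog2, dif_pos hA]
  nth_rewrite 1 [hA']
  calc (U * diagonal (fun i => (hA.eigenvalues i : ℂ)) * star U *
          (U * diagonal (fun i => (Real.logb 2 (hA.eigenvalues i) : ℂ)) * star U)).trace
      = (U * (diagonal (fun i => (hA.eigenvalues i : ℂ)) *
          diagonal (fun i => (Real.logb 2 (hA.eigenvalues i) : ℂ))) * star U).trace := by
        simp only [Matrix.mul_assoc, ← Matrix.mul_assoc (star U) U, hUU, Matrix.one_mul]
    _ = _ := by
        rw [trace_mul_cycle, ← Matrix.mul_assoc, hUU, Matrix.one_mul, diagonal_mul_diagonal,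
          trace_diagonal]
        push_cast
        rfl

lemma Matrix.IsHermitian.map_eigenvalues_eq_of_eq_unitary_conj {A V : Matrix n n ℂ}
    (hA : A.IsHermitian) (hV : V ∈ unitaryGroup n ℂ) {p : n → ℝ}
    (h : A = V * diagonal (fun i => (p i : ℂ)) * star V) :
    Finset.univ.val.map hA.eigenvalues = Finset.univ.val.map p := by
  have hc : A.charpoly = (diagonal fun i => (p i : ℂ)).charpoly := by
    rw [h, charpoly_mul_comm, ← Matrix.mul_assoc, mem_unitaryGroup_iff'.mp hV, Matrix.one_mul]
  simpa [hA.roots_charpoly_eq_eigenvalues, charpoly_diagonal, Polynomial.roots_prod,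
    Finset.prod_ne_zero_iff, Polynomial.X_sub_C_ne_zero, Multiset.map_map]
    using congrArg (fun q => q.roots.map Complex.re) hc

lemma vN_unitary_mul_diagonal_mul_star {V : Matrix n n ℂ} (hV : V ∈ unitaryGroup n ℂ)
    (p : n → ℝ) :
    vN (V * diagonal (fun i => (p i : ℂ)) * star V) = -∑ i, p i * Real.logb 2 (p i) := by
  have hA : (V * diagonal (fun i => (p i : ℂ)) * star V).IsHermitian :=
    isHermitian_mul_mul_conjTranspose V
      (isHermitian_diagonal_iff.mpr fun i => Complex.conj_ofReal _)
  have hmap := congrArg (fun m : Multiset ℝ => (m.map fun x => x * Real.logb 2 x).sum)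
    (hA.map_eigenvalues_eq_of_eq_unitary_conj hV rfl)
  simp only [Multiset.map_map, Function.comp_def] at hmap
  rw [vN, trace_mul_matLog2 hA, ← Complex.ofReal_sum, Complex.ofReal_re]
  exact congrArg Neg.neg hmap

end VonNeumannEntropy

section ColumnProjectors

variable {n : Type*}

def colProj (V : Matrix n n ℂ) (i : n) : Matrix n n ℂ :=
  vecMulVec (Vᵀ i) (star (Vᵀ i))

lemma colProj_kronecker {m : Type*} (V : Matrix n n ℂ) (W : Matrix m m ℂ) (i : n) (j : m) :
    colProj V i ⊗ₖ colProj W j = colProj (V ⊗ₖ W) (i, j) := by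
  ext ⟨a, b⟩ ⟨c, d⟩
  simp only [colProj, kroneckerMap_apply, vecMulVec_apply, transpose_apply, Pi.star_apply,
    star_mul']
  ring

variable [Fintype n]

lemma star_transpose_dotProduct (V : Matrix n n ℂ) (i j : n) :
    star (Vᵀ i) ⬝ᵥ Vᵀ j = (star V * V) i j := by
  simp [mul_apply, dotProduct]

variable [DecidableEq n]

lemma sum_norm_sq_col_eq_one {V : Matrix n n ℂ} (hV : V ∈ unitaryGroup n ℂ) (i : n) :
    ∑ a, ‖V a i‖ ^ 2 = 1 := by
  have h := star_transpose_dotProduct V i i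
  rw [mem_unitaryGroup_iff'.mp hV, one_apply_eq] at h
  have : ((∑ a, ‖V a i‖ ^ 2 : ℝ) : ℂ) = 1 := by
    rw [← h]; simp [dotProduct, Complex.sq_norm, Complex.normSq_eq_conj_mul_self]
  exact_mod_cast this

lemma exists_eq_one_of_sum_eq_one {ι : Type*} [Fintype ι] [DecidableEq ι] {d : ι → ℝ}
    (h01 : ∀ i, d i = 0 ∨ d i = 1) (hsum : ∑ i, d i = 1) : ∃ k, d k = 1 ∧ ∀ i ≠ k, d i = 0 := by
  obtain ⟨k, hk⟩ : ∃ k, d k = 1 := by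
    by_contra! h
    simp [fun i => (h01 i).resolve_right (h i)] at hsum
  have hrest : ∑ i ∈ Finset.univ.erase k, d i = 0 := by
    linarith [Finset.add_sum_erase Finset.univ d (Finset.mem_univ k)]
  refine ⟨k, hk, fun i hi => (Finset.sum_eq_zero_iff_of_nonneg fun j _ => ?_).mp hrest i
    (Finset.mem_erase.mpr ⟨hi, Finset.mem_univ i⟩)⟩
  rcases h01 j with h | h <;> simp [h]

lemma Matrix.IsHermitian.eigenvalues_eq_zero_or_one {Q : Matrix n n ℂ} (hH : Q.IsHermitian)
    (hI : Q * Q = Q) (i : n) : hH.eigenvalues i = 0 ∨ hH.eigenvalues i = 1 := by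
  set U : Matrix n n ℂ := (hH.eigenvectorUnitary : Matrix n n ℂ)
  set D := diagonal (fun i => (hH.eigenvalues i : ℂ))
  have hUU : star U * U = 1 := mem_unitaryGroup_iff'.mp hH.eigenvectorUnitary.2
  have hQ : Q = U * D * star U := hH.spectral_theorem
  have hD : D = star U * Q * U := by
    rw [hQ, show star U * (U * D * star U) * U =
      star U * U * D * (star U * U) by noncomm_ring, hUU, Matrix.one_mul, Matrix.mul_one]
  have hDD : D * D = D := by
    conv_lhs => rw [hD]
    rw [show star U * Q * U * (star U * Q * U) = star U * (Q * (U * star U) * Q) * U by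
      noncomm_ring, mem_unitaryGroup_iff.mp hH.eigenvectorUnitary.2, Matrix.mul_one, hI, hD]
  rw [diagonal_mul_diagonal] at hDD
  have hii : hH.eigenvalues i * (hH.eigenvalues i - 1) = 0 := by
    have := congrFun (diagonal_injective hDD) i
    norm_cast at this
    linarith
  rcases mul_eq_zero.mp hii with h | h
  · exact Or.inl h
  · exact Or.inr (by linarith)

lemma exists_eq_colProj_of_isHermitian_of_mul_self {Q : Matrix n n ℂ} (hH : Q.IsHermitian)
    (hI : Q * Q = Q) (hT : Q.trace = 1) :
    ∃ U ∈ unitaryGroup n ℂ, ∃ k, Q = colProj U k := by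
  have hsum : ∑ i, hH.eigenvalues i = 1 := by
    simpa using congrArg Complex.re (hH.trace_eq_sum_eigenvalues.symm.trans hT)
  obtain ⟨k, hk, hrest⟩ :=
    exists_eq_one_of_sum_eq_one (hH.eigenvalues_eq_zero_or_one hI) hsum
  set U : Matrix n n ℂ := (hH.eigenvectorUnitary : Matrix n n ℂ)
  set d := hH.eigenvalues
  have hQ : Q = U * diagonal (fun i => (d i : ℂ)) * star U := hH.spectral_theorem
  refine ⟨U, hH.eigenvectorUnitary.2, k, ?_⟩
  ext a b
  rw [hQ, colProj, mul_apply, Finset.sum_eq_single k]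
  · simp [mul_diagonal, hk, vecMulVec_apply]
  · intro i _ hi
    simp [mul_diagonal, hrest i hi]
  · simp

lemma measFam_colProj {V : Matrix n n ℂ} (hV : V ∈ unitaryGroup n ℂ) : MeasFam (colProj V) := by
  have hdot : ∀ i j, star (Vᵀ i) ⬝ᵥ Vᵀ j = if i = j then 1 else 0 := fun i j => by
    rw [star_transpose_dotProduct, mem_unitaryGroup_iff'.mp hV, one_apply]
  refine ⟨fun i => ?_, fun i => ?_, fun i j hij => ?_, ?_, fun i => ?_⟩
  · simp [colProj, IsHermitian, conjTranspose_vecMulVec]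
  · simp [colProj, vecMulVec_mul_vecMulVec, hdot]
  · simp [colProj, vecMulVec_mul_vecMulVec, hdot, hij]
  · ext a b
    simpa [colProj, Matrix.sum_apply, mul_apply, vecMulVec_apply]
      using congrFun (congrFun (mem_unitaryGroup_iff.mp hV) a) b
  · rw [colProj, trace_vecMulVec, dotProduct_comm, hdot, if_pos rfl]

lemma MeasFam.exists_eq_colProj {Q : n → Matrix n n ℂ} (hQ : MeasFam Q) :
    ∃ V ∈ unitaryGroup n ℂ, Q = colProj V := by
  choose U hU k hk using fun i =>
    exists_eq_colProj_of_isHermitian_of_mul_self (hQ.1 i) (hQ.2.1 i) (hQ.2.2.2.2 i)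
  set u : n → n → ℂ := fun i => (U i)ᵀ (k i)
  have hnorm : ∀ i, star (u i) ⬝ᵥ u i = 1 := fun i => by
    simp only [u, star_transpose_dotProduct, mem_unitaryGroup_iff'.mp (hU i), one_apply_eq]
  have horth : ∀ i j, i ≠ j → star (u i) ⬝ᵥ u j = 0 := fun i j hij => by
    have h := hQ.2.2.1 i j hij
    rw [hk i, hk j, colProj, colProj, vecMulVec_mul_vecMulVec, vecMulVec_eq_zero,
      smul_eq_zero] at h
    have hne : ∀ l, u l ≠ 0 := fun l h0 => by simpa [h0] using hnorm l
    exact (h.resolve_left (hne i)).resolve_right (star_ne_zero.mpr (hne j))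
  refine ⟨(of u)ᵀ, mem_unitaryGroup_iff'.mpr ?_, funext hk⟩
  ext i j
  rw [← star_transpose_dotProduct, one_apply]
  split_ifs with h
  · subst h; exact hnorm i
  · exact horth i j h

lemma mul_diagonal_mul_star_eq_sum (V : Matrix n n ℂ) (c : n → ℂ) :
    V * diagonal c * star V = ∑ i, c i • colProj V i := by
  ext a b
  rw [mul_apply]
  simp only [mul_diagonal, Matrix.sum_apply, Matrix.smul_apply, colProj, vecMulVec_apply,
    transpose_apply, Pi.star_apply, star_apply, smul_eq_mul]
  exact Finset.sum_congr rfl fun i _ => by ring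

lemma pinch_colProj_vecMulVec (V : Matrix n n ℂ) (g : n → ℂ) :
    pinch (colProj V) (vecMulVec g (star g)) =
      V * diagonal (fun i => (Complex.normSq ((star V *ᵥ g) i) : ℂ)) * star V := by
  rw [mul_diagonal_mul_star_eq_sum, pinch]
  refine Finset.sum_congr rfl fun i _ => ?_
  have hdot : star (Vᵀ i) ⬝ᵥ g = (star V *ᵥ g) i := by
    simp [mulVec, dotProduct, star_apply]
  have hdot' : star g ⬝ᵥ Vᵀ i = star ((star V *ᵥ g) i) := by
    simp [← hdot, dotProduct, star_sum, mul_comm]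
  rw [colProj, vecMulVec_mul_vecMulVec, vecMulVec_mul_vecMulVec, smul_dotProduct, hdot, hdot',
    smul_eq_mul, vecMulVec_smul, Complex.star_def, Complex.mul_conj]

lemma sum_normSq_star_mulVec {V : Matrix n n ℂ} (hV : V ∈ unitaryGroup n ℂ) (g : n → ℂ) :
    ∑ i, Complex.normSq ((star V *ᵥ g) i) = ∑ a, Complex.normSq (g a) := by
  have key : star (star V *ᵥ g) ⬝ᵥ (star V *ᵥ g) = star g ⬝ᵥ g := by
    rw [star_mulVec, dotProduct_mulVec, vecMul_vecMul, star_eq_conjTranspose,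
      conjTranspose_conjTranspose, ← star_eq_conjTranspose, mem_unitaryGroup_iff.mp hV,
      vecMul_one]
  have hcast : ∀ x : n → ℂ, ((∑ i, Complex.normSq (x i) : ℝ) : ℂ) = star x ⬝ᵥ x := fun x => by
    simp [dotProduct, Complex.normSq_eq_conj_mul_self]
  exact_mod_cast (hcast _).trans (key.trans (hcast g).symm)

end ColumnProjectors

lemma phi3_colProj (V₁ V₂ V₃ : Matrix (Fin 2) (Fin 2) ℂ)
    (ρ : Matrix (Fin 2 × Fin 2 × Fin 2) (Fin 2 × Fin 2 × Fin 2) ℂ) :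
    phi3 (colProj V₁) (colProj V₂) (colProj V₃) ρ = pinch (colProj (V₁ ⊗ₖ (V₂ ⊗ₖ V₃))) ρ := by
  simp only [phi3, pinch, colProj_kronecker]

lemma normSq_ghz (s : Fin 2 × Fin 2 × Fin 2) :
    Complex.normSq (ghz s) = if s = (0, 0, 0) ∨ s = (1, 1, 1) then 1 / 2 else 0 := by
  unfold ghz
  split_ifs
  · rw [Complex.normSq_ofReal, ← mul_inv, Real.mul_self_sqrt zero_le_two, one_div]
  · simp

lemma mul_mul_add_mul_mul_le_one {x₁ y₁ x₂ y₂ x₃ y₃ : ℝ} (h₁ : x₁ ^ 2 + y₁ ^ 2 = 1)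
    (h₂ : x₂ ^ 2 + y₂ ^ 2 = 1) (h₃ : x₃ ^ 2 + y₃ ^ 2 = 1) :
    x₁ * (x₂ * x₃) + y₁ * (y₂ * y₃) ≤ 1 := by
  nlinarith [sq_nonneg (x₁ - x₂ * x₃), sq_nonneg (y₁ - y₂ * y₃), sq_nonneg (x₂ * y₃ - y₂ * x₃)]

lemma normSq_star_kronecker_mulVec_ghz_le {V₁ V₂ V₃ : Matrix (Fin 2) (Fin 2) ℂ}
    (h₁ : V₁ ∈ unitaryGroup (Fin 2) ℂ) (h₂ : V₂ ∈ unitaryGroup (Fin 2) ℂ)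
    (h₃ : V₃ ∈ unitaryGroup (Fin 2) ℂ) (s : Fin 2 × Fin 2 × Fin 2) :
    Complex.normSq ((star (V₁ ⊗ₖ (V₂ ⊗ₖ V₃)) *ᵥ ghz) s) ≤ 1 / 2 := by
  obtain ⟨i, j, k⟩ := s
  have hz : (star (V₁ ⊗ₖ (V₂ ⊗ₖ V₃)) *ᵥ ghz) (i, j, k) = ((Real.sqrt 2)⁻¹ : ℂ) *
      (star (V₁ 0 i * (V₂ 0 j * V₃ 0 k)) + star (V₁ 1 i * (V₂ 1 j * V₃ 1 k))) := by
    simp [mulVec, dotProduct, ghz, Fintype.sum_prod_type, Fin.sum_univ_two, Prod.ext_iff]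
    ring
  have hcol : ∀ {V : Matrix (Fin 2) (Fin 2) ℂ}, V ∈ unitaryGroup (Fin 2) ℂ →
      ∀ l, ‖V 0 l‖ ^ 2 + ‖V 1 l‖ ^ 2 = 1 := fun hV l => by
    simpa [Fin.sum_univ_two] using sum_norm_sq_col_eq_one hV l
  have hsum : ‖V₁ 0 i * (V₂ 0 j * V₃ 0 k)‖ + ‖V₁ 1 i * (V₂ 1 j * V₃ 1 k)‖ ≤ 1 := by
    simp only [norm_mul]
    exact mul_mul_add_mul_mul_le_one (hcol h₁ i) (hcol h₂ j) (hcol h₃ k)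
  have hnorm : ‖(star (V₁ ⊗ₖ (V₂ ⊗ₖ V₃)) *ᵥ ghz) (i, j, k)‖ ≤ (Real.sqrt 2)⁻¹ := by
    rw [hz, norm_mul, norm_inv, Complex.norm_real, Real.norm_of_nonneg (Real.sqrt_nonneg 2)]
    refine mul_le_of_le_one_right (by positivity) ((norm_add_le _ _).trans ?_)
    simpa only [norm_star] using hsum
  rw [Complex.normSq_eq_norm_sq]
  calc _ ≤ ((Real.sqrt 2)⁻¹) ^ 2 := pow_le_pow_left₀ (norm_nonneg _) hnorm 2
    _ = 1 / 2 := by rw [inv_pow, Real.sq_sqrt zero_le_two, one_div]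

/-- the global quantum discord of the GHZ state equals 1: the minimum
over all local product projective measurements of `S(Φ(ρ))` is `1`, attained for some
measurement (the `σ^z` eigenbasis on each qubit). -/
theorem stmt14 :
    (∀ Q1 Q2 Q3 : Fin 2 → Matrix (Fin 2) (Fin 2) ℂ,
      MeasFam Q1 → MeasFam Q2 → MeasFam Q3 → 1 ≤ vN (phi3 Q1 Q2 Q3 ghzState)) ∧
    (∃ Q1 Q2 Q3 : Fin 2 → Matrix (Fin 2) (Fin 2) ℂ,
      MeasFam Q1 ∧ MeasFam Q2 ∧ MeasFam Q3 ∧ vN (phi3 Q1 Q2 Q3 ghzState) = 1) := by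
  refine ⟨fun Q₁ Q₂ Q₃ hQ₁ hQ₂ hQ₃ => ?_, colProj 1, colProj 1, colProj 1, ?_⟩
  · obtain ⟨V₁, h₁, rfl⟩ := hQ₁.exists_eq_colProj
    obtain ⟨V₂, h₂, rfl⟩ := hQ₂.exists_eq_colProj
    obtain ⟨V₃, h₃, rfl⟩ := hQ₃.exists_eq_colProj
    have hW := kronecker_mem_unitary h₁ (kronecker_mem_unitary h₂ h₃)
    rw [phi3_colProj, ghzState, pinch_colProj_vecMulVec, vN_unitary_mul_diagonal_mul_star hW]
    refine one_le_neg_sum_mul_logb_two (fun s => Complex.normSq_nonneg _)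
      (normSq_star_kronecker_mulVec_ghz_le h₁ h₂ h₃) ?_
    rw [sum_normSq_star_mulVec hW]
    norm_num [normSq_ghz, Fintype.sum_prod_type, Fin.sum_univ_two]
  · have h1 := measFam_colProj (one_mem (unitaryGroup (Fin 2) ℂ))
    refine ⟨h1, h1, h1, ?_⟩
    rw [phi3_colProj, ghzState, pinch_colProj_vecMulVec, vN_unitary_mul_diagonal_mul_star
      (kronecker_mem_unitary (one_mem _) (kronecker_mem_unitary (one_mem _) (one_mem _))),
      one_kronecker_one, one_kronecker_one, star_one, one_mulVec]
    norm_num [normSq_ghz, Fintype.sum_prod_type, Fin.sum_univ_two, logb_two_half]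
end

section
/- The function D(μ) = −(1/4)(1+3μ)log₂(1+3μ) + (1/8)(1−μ)log₂(1−μ) + (1/8)(1+7μ)log₂(1+7μ) on [0,1] is non-negative, vanishes only at μ = 0, is monotonically increasing, and satisfies D(1) = 1. -/
open scoped Kronecker
open Matrix
open scoped ComplexOrder

/-- The global quantum discord of the Werner-GHZ state as a function of `μ`. -/
noncomputable def Dw (μ : ℝ) : ℝ :=
  -(1 / 4) * (1 + 3 * μ) * Real.logb 2 (1 + 3 * μ)
    + (1 / 8) * (1 - μ) * Real.logb 2 (1 - μ)
    + (1 / 8) * (1 + 7 * μ) * Real.logb 2 (1 + 7 * μ)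

/-! Up to the factor `1 / (8 log 2)`, `D` is a signed sum of `x log x` at the affine points
`1 + 7μ`, `1 - μ` and `1 + 3μ`, whose slopes `7, -1, -6` add up to zero. The derivative is
therefore `(7 log (1 + 7μ) - log (1 - μ) - 6 log (1 + 3μ)) / (8 log 2)`, which is positive on
`(0, 1)` simply because `1 - μ < 1 + 7μ` and `1 + 3μ < 1 + 7μ`. So `D` is strictly increasing
from `D 0 = 0`, and `D 1 = -log₂ 4 + log₂ 8 = 1`. -/

open Real

theorem HasDerivAt.mul_log {f : ℝ → ℝ} {f' x : ℝ} (hf : HasDerivAt f f' x) (hx : f x ≠ 0) :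
    HasDerivAt (fun y ↦ f y * Real.log (f y)) ((Real.log (f x) + 1) * f') x :=
  (hasDerivAt_mul_log hx).comp x hf

theorem Dw_eq_mul_log (μ : ℝ) :
    Dw μ = ((1 + 7 * μ) * log (1 + 7 * μ) + (1 - μ) * log (1 - μ)
      - 2 * ((1 + 3 * μ) * log (1 + 3 * μ))) / (8 * log 2) := by
  simp only [Dw, logb]
  ring

theorem continuous_Dw : Continuous Dw := by
  rw [funext Dw_eq_mul_log]
  fun_prop

theorem hasDerivAt_Dw {μ : ℝ} (h0 : 0 ≤ μ) (h1 : μ < 1) :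
    HasDerivAt Dw ((7 * log (1 + 7 * μ) - log (1 - μ) - 6 * log (1 + 3 * μ)) / (8 * log 2)) μ := by
  have affine (a b : ℝ) : HasDerivAt (fun y ↦ a + b * y) b μ := by
    simpa using ((hasDerivAt_id μ).const_mul b).const_add a
  have d7 := (affine 1 7).mul_log (by positivity)
  have d1 : HasDerivAt (fun y ↦ (1 - y) * log (1 - y)) ((log (1 - μ) + 1) * -1) μ :=
    ((hasDerivAt_id' μ).const_sub 1).mul_log (by linarith)
  have d3 := (affine 1 3).mul_log (by positivity)
  rw [funext Dw_eq_mul_log]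
  exact (((d7.add d1).sub (d3.const_mul 2)).div_const (8 * log 2)).congr_deriv (by ring)

theorem log_combination_pos {μ : ℝ} (h0 : 0 < μ) (h1 : μ < 1) :
    0 < 7 * log (1 + 7 * μ) - log (1 - μ) - 6 * log (1 + 3 * μ) := by
  have hl1 : log (1 - μ) < log (1 + 7 * μ) := log_lt_log (by linarith) (by linarith)
  have hl3 : log (1 + 3 * μ) < log (1 + 7 * μ) := log_lt_log (by linarith) (by linarith)
  linarith

theorem strictMonoOn_Dw : StrictMonoOn Dw (Set.Icc 0 1) := by
  refine strictMonoOn_of_hasDerivWithinAt_pos (convex_Icc 0 1) continuous_Dw.continuousOn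
    (f' := fun μ ↦ (7 * log (1 + 7 * μ) - log (1 - μ) - 6 * log (1 + 3 * μ)) / (8 * log 2))
    (fun μ hμ ↦ ?_) (fun μ hμ ↦ ?_) <;> rw [interior_Icc] at hμ
  · exact (hasDerivAt_Dw hμ.1.le hμ.2).hasDerivWithinAt
  · exact div_pos (log_combination_pos hμ.1 hμ.2) (by positivity)

theorem Dw_zero : Dw 0 = 0 := by
  simp [Dw]

theorem Dw_one : Dw 1 = 1 := by
  have h4 : logb 2 4 = 2 := by
    rw [show (4 : ℝ) = 2 ^ 2 by norm_num, logb_pow, logb_self_eq_one one_lt_two]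
    norm_num
  have h8 : logb 2 8 = 3 := by
    rw [show (8 : ℝ) = 2 ^ 3 by norm_num, logb_pow, logb_self_eq_one one_lt_two]
    norm_num
  norm_num [Dw, h4, h8]

/-- on `[0,1]`, `D(μ)` is non-negative, vanishes only at `μ = 0`,
is monotonically increasing, and `D(1) = 1`. -/
theorem stmt17 :
    (∀ μ ∈ Set.Icc (0 : ℝ) 1, 0 ≤ Dw μ) ∧
    (∀ μ ∈ Set.Icc (0 : ℝ) 1, Dw μ = 0 ↔ μ = 0) ∧
    MonotoneOn Dw (Set.Icc (0 : ℝ) 1) ∧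
    Dw 1 = 1 := by
  have h0 : (0 : ℝ) ∈ Set.Icc (0 : ℝ) 1 := Set.left_mem_Icc.2 zero_le_one
  refine ⟨fun μ hμ ↦ ?_, fun μ hμ ↦ ?_, strictMonoOn_Dw.monotoneOn, Dw_one⟩
  · simpa [Dw_zero] using strictMonoOn_Dw.monotoneOn h0 hμ hμ.1
  · simpa [Dw_zero] using strictMonoOn_Dw.injOn.eq_iff hμ h0
end
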